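/- Let a < t₁, h = t₁ - a, t_{1/2} = (a+t₁)/2, and β⁻ > 0, and let q be continuous on [a,t₁]. Let φ₀ and φ_{1/2} be the standard quadratic Lagrange basis functions on [a,t₁] at the nodes a and t_{1/2}, so φ₀'(x) = (2/h²)(2x - t_{1/2} - t₁), φ_{1/2}(x) = -(4/h²)(x-a)(x-t₁), and φ_{1/2}'(x) = -(4/h²)(2x - a - t₁). Let e be continuously differentiable on [a,t₁] with e(a) = 0 and ∫_a^{t₁} (β⁻ e' φ_{1/2}' + q e φ_{1/2}) dx = 0. Then ∫_a^{t₁} β⁻ e' φ₀' dx = (2β⁻/h²)(a - t_{1/2}) e(t₁) + (1/2) ∫_a^{t₁} q e φ_{1/2} dx. -/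

import Mathlib

open Set intervalIntegral

/-!
The derivatives of the two quadratic Lagrange basis functions satisfy
`φ₀' + ½ φ_{1/2}' = (2/h²)(a - t_{1/2})`, a constant. Hence
`∫ β⁻ e' φ₀' = -½ ∫ β⁻ e' φ_{1/2}' + (2β⁻/h²)(a - t_{1/2}) ∫ e'`; the Galerkin relation replaces the
first integral by `-∫ q e φ_{1/2}`, and the fundamental theorem of calculus with `e a = 0` turns the
second into `e t₁`.
-/

theorem integral_eq_sub_of_hasDerivWithinAt_Icc {f f' : ℝ → ℝ} {a b : ℝ} (hab : a ≤ b)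
    (hf : ∀ x ∈ Icc a b, HasDerivWithinAt f (f' x) (Icc a b) x)
    (hf' : IntervalIntegrable f' MeasureTheory.volume a b) :
    ∫ x in a..b, f' x = f b - f a :=
  integral_eq_sub_of_hasDerivAt_of_le hab (fun x hx => (hf x hx).continuousWithinAt)
    (fun x hx => (hf x (Ioo_subset_Icc_self hx)).hasDerivAt (Icc_mem_nhds hx.1 hx.2)) hf'

theorem integral_mul_const_mul_add_const {f g : ℝ → ℝ} {a b : ℝ} (r c : ℝ)
    (hfg : IntervalIntegrable (fun x => f x * g x) MeasureTheory.volume a b)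
    (hf : IntervalIntegrable f MeasureTheory.volume a b) :
    ∫ x in a..b, f x * (r * g x + c) = r * (∫ x in a..b, f x * g x) + c * ∫ x in a..b, f x := by
  simp_rw [mul_add, mul_left_comm (f _) r, mul_comm (f _) c]
  rw [integral_add (hfg.const_mul r) (hf.const_mul c), integral_const_mul, integral_const_mul]

theorem quadLagrange_deriv_left_eq_neg_half_deriv_mid_add_const (a t1 x : ℝ) :
    (2 / (t1 - a) ^ 2) * (2 * x - (a + t1) / 2 - t1)
      = -(1 / 2) * (-(4 / (t1 - a) ^ 2) * (2 * x - a - t1))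
        + (2 / (t1 - a) ^ 2) * (a - (a + t1) / 2) := by
  ring

theorem stmt_17_general (a t1 βm : ℝ) (h : a < t1)
    (q e e' : ℝ → ℝ) (hq : ContinuousOn q (Icc a t1))
    (he : ∀ x ∈ Icc a t1, HasDerivWithinAt e (e' x) (Icc a t1) x)
    (he'c : ContinuousOn e' (Icc a t1))
    (hea : e a = 0)
    (horth : (∫ x in a..t1,
        (βm * e' x * (-(4 / (t1 - a) ^ 2) * (2 * x - a - t1))
          + q x * e x * (-(4 / (t1 - a) ^ 2) * ((x - a) * (x - t1))))) = 0) :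
    (∫ x in a..t1,
        βm * e' x * ((2 / (t1 - a) ^ 2) * (2 * x - (a + t1) / 2 - t1)))
      = (2 * βm / (t1 - a) ^ 2) * (a - (a + t1) / 2) * e t1
        + (1 / 2) * ∫ x in a..t1,
            q x * e x * (-(4 / (t1 - a) ^ 2) * ((x - a) * (x - t1))) := by
  have huIcc : uIcc a t1 = Icc a t1 := uIcc_of_le h.le
  have he_cont : ContinuousOn e (Icc a t1) := fun x hx => (he x hx).continuousWithinAt
  have hβe' : IntervalIntegrable (fun x => βm * e' x) MeasureTheory.volume a t1 :=
    ContinuousOn.intervalIntegrable (huIcc ▸ continuousOn_const.mul he'c)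
  have hflux : IntervalIntegrable (fun x => βm * e' x * (-(4 / (t1 - a) ^ 2) * (2 * x - a - t1)))
      MeasureTheory.volume a t1 :=
    ContinuousOn.intervalIntegrable (huIcc ▸ (continuousOn_const.mul he'c).mul (by fun_prop))
  have hreaction : IntervalIntegrable
      (fun x => q x * e x * (-(4 / (t1 - a) ^ 2) * ((x - a) * (x - t1))))
      MeasureTheory.volume a t1 :=
    ContinuousOn.intervalIntegrable (huIcc ▸ (hq.mul he_cont).mul (by fun_prop))
  have hgalerkin := integral_add hflux hreaction
  rw [horth] at hgalerkin
  have hftc : ∫ x in a..t1, βm * e' x = βm * e t1 := by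
    rw [integral_const_mul, integral_eq_sub_of_hasDerivWithinAt_Icc h.le he
      (ContinuousOn.intervalIntegrable (huIcc ▸ he'c)), hea, sub_zero]
  simp_rw [quadLagrange_deriv_left_eq_neg_half_deriv_mid_add_const a t1]
  rw [integral_mul_const_mul_add_const (f := fun x => βm * e' x) _ _ hflux hβe', hftc]
  linear_combination (1 / 2 : ℝ) * hgalerkin

/-- Refined endpoint flux identity (case q ≥ 0): if `e` is `C¹` on `[a,t₁]` with
`e a = 0` and satisfies the Galerkin relation tested with the midpoint basis
function `φ_{1/2} = -(4/h²)(x-a)(x-t₁)`, then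
`∫ β⁻ e' φ₀' = (2β⁻/h²)(a - t_{1/2}) e(t₁) + (1/2) ∫ q e φ_{1/2}`. -/
theorem stmt_17 (a t1 βm : ℝ) (h : a < t1) (hβ : 0 < βm)
    (q e e' : ℝ → ℝ) (hq : ContinuousOn q (Icc a t1))
    (he : ∀ x ∈ Icc a t1, HasDerivWithinAt e (e' x) (Icc a t1) x)
    (he'c : ContinuousOn e' (Icc a t1))
    (hea : e a = 0)
    (horth : (∫ x in a..t1,
        (βm * e' x * (-(4 / (t1 - a) ^ 2) * (2 * x - a - t1))
          + q x * e x * (-(4 / (t1 - a) ^ 2) * ((x - a) * (x - t1))))) = 0) :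
    (∫ x in a..t1,
        βm * e' x * ((2 / (t1 - a) ^ 2) * (2 * x - (a + t1) / 2 - t1)))
      = (2 * βm / (t1 - a) ^ 2) * (a - (a + t1) / 2) * e t1
        + (1 / 2) * ∫ x in a..t1,
            q x * e x * (-(4 / (t1 - a) ^ 2) * ((x - a) * (x - t1))) :=
  stmt_17_general a t1 βm h q e e' hq he he'c hea horth
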